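/- arXiv:1003.1506 — 4 statements merged into one kernel-verified Lean document; each statement's English description precedes it below -/
import Mathlib

section
/- Let Q ≥ 2 and let P be the uniform probability measure on S_N. For every η ∈ ℤ^M with F⁻¹(η) ≠ ∅, the conditional expectation of the long-range Hamiltonian given the coarse configuration equals the coarse-grained long-range Hamiltonian: E[H^l(σ) | F(σ) = η] = H̄^{l,(0)}(η) = −(1/2) Σ_{k≠l} J̄(k,l) η(k)η(l) − (1/2) Σ_{k=0}^{M−1} J̄(k,k)(η(k)² − Q). -/
open Finset

/-- The spin value of a site: `true ↦ +1`, `false ↦ -1`. -/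
def spin (b : Bool) : ℤ := if b then 1 else -1

/-- The coarse cell `C_k = {kQ, …, (k+1)Q - 1}` inside the lattice `Fin (M*Q)`. -/
def cell (M Q : ℕ) (k : Fin M) : Finset (Fin (M * Q)) :=
  univ.filter (fun x => x.val / Q = k.val)

/-- The coarse-graining map `F(σ)(k) = Σ_{x ∈ C_k} σ(x)`. -/
def cg (M Q : ℕ) (σ : Fin (M * Q) → Bool) (k : Fin M) : ℤ :=
  ∑ x ∈ cell M Q k, spin (σ x)

/-- The long-range Hamiltonian `H^l(σ) = -(1/2) Σ_{x ≠ y} J(x-y) σ(x) σ(y)`. -/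
noncomputable def Hlong (M Q : ℕ) (J : ℤ → ℝ) (σ : Fin (M * Q) → Bool) : ℝ :=
  -(1 / 2) * ∑ x : Fin (M * Q), ∑ y ∈ univ.filter (fun y => y ≠ x),
    J ((x.val : ℤ) - (y.val : ℤ)) * (spin (σ x) : ℝ) * (spin (σ y) : ℝ)

/-- Cell-averaged couplings `J̄(k,l)`. -/
noncomputable def Jbar (M Q : ℕ) (J : ℤ → ℝ) (k l : Fin M) : ℝ :=
  if k = l then
    (∑ x ∈ cell M Q k, ∑ y ∈ (cell M Q k).filter (fun y => y ≠ x),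
        J ((x.val : ℤ) - (y.val : ℤ))) / ((Q : ℝ) * ((Q : ℝ) - 1))
  else
    (∑ x ∈ cell M Q k, ∑ y ∈ cell M Q l, J ((x.val : ℤ) - (y.val : ℤ))) / ((Q : ℝ) ^ 2)

/-- The coarse-grained long-range Hamiltonian `H̄^{l,(0)}(η)`. -/
noncomputable def Hlong0 (M Q : ℕ) (J : ℤ → ℝ) (η : Fin M → ℤ) : ℝ :=
  -(1 / 2) * (∑ k : Fin M, ∑ l ∈ univ.filter (fun l => l ≠ k),
      Jbar M Q J k l * (η k : ℝ) * (η l : ℝ))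
  - (1 / 2) * ∑ k : Fin M, Jbar M Q J k k * ((η k : ℝ) ^ 2 - (Q : ℝ))

section Aux
variable {M Q : ℕ}

lemma mem_cell {x : Fin (M*Q)} {k : Fin M} : x ∈ cell M Q k ↔ x.val / Q = k.val := by
  simp [cell]

lemma cellOf_lt (hQ : 0 < Q) (x : Fin (M*Q)) : x.val / Q < M :=
  (Nat.div_lt_iff_lt_mul hQ).2 x.isLt

lemma cell_card (hQ : 0 < Q) (k : Fin M) : (cell M Q k).card = Q := by
  classical
  have h : cell M Q k = (Finset.univ : Finset (Fin Q)).image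
      (fun j => (⟨k.val * Q + j.val, by
        calc k.val * Q + j.val < (k.val+1) * Q := by nlinarith [k.isLt, j.isLt]
          _ ≤ M * Q := Nat.mul_le_mul_right _ k.isLt⟩ : Fin (M*Q))) := by
    ext x
    simp only [mem_cell, Finset.mem_image, Finset.mem_univ, true_and]
    constructor
    · intro h
      refine ⟨⟨x.val % Q, Nat.mod_lt _ hQ⟩, ?_⟩
      apply Fin.ext
      simp only
      rw [← h]
      exact Nat.div_add_mod' _ _
    · rintro ⟨j, rfl⟩
      simp only
      rw [Nat.mul_comm, Nat.mul_add_div hQ, Nat.div_eq_of_lt j.isLt, Nat.add_zero]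
  have hinj : Function.Injective (fun j : Fin Q => (⟨k.val * Q + j.val, by
        calc k.val * Q + j.val < (k.val+1) * Q := by nlinarith [k.isLt, j.isLt]
          _ ≤ M * Q := Nat.mul_le_mul_right _ k.isLt⟩ : Fin (M*Q))) := by
    intro a b hab
    have := Fin.val_eq_of_eq hab
    simp only at this
    exact Fin.ext (by omega)
  rw [h, Finset.card_image_of_injective _ hinj, Finset.card_univ, Fintype.card_fin]

lemma swap_cell (a b : Fin (M*Q)) (hab : a.val / Q = b.val / Q) (x : Fin (M*Q)) :
    ((Equiv.swap a b x : Fin (M*Q)) : ℕ) / Q = (x : ℕ) / Q := by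
  rcases eq_or_ne x a with rfl | hxa
  · rw [Equiv.swap_apply_left]; exact hab.symm
  rcases eq_or_ne x b with rfl | hxb
  · rw [Equiv.swap_apply_right]; exact hab
  · rw [Equiv.swap_apply_of_ne_of_ne hxa hxb]

lemma cg_comp (σ : Fin (M*Q) → Bool) (π : Equiv.Perm (Fin (M*Q)))
    (hπ : ∀ x : Fin (M*Q), ((π x : Fin (M*Q)) : ℕ) / Q = (x : ℕ) / Q) :
    cg M Q (σ ∘ π) = cg M Q σ := by
  funext k
  unfold cg
  refine Finset.sum_equiv π (fun i => ?_) (fun i _ => rfl)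
  simp only [mem_cell, hπ i]

lemma sum_comp_perm {η : Fin M → ℤ} (g : (Fin (M*Q) → Bool) → ℝ) (π : Equiv.Perm (Fin (M*Q)))
    (hπ : ∀ x : Fin (M*Q), ((π x : Fin (M*Q)) : ℕ) / Q = (x : ℕ) / Q) :
    ∑ σ ∈ univ.filter (fun σ : Fin (M*Q) → Bool => cg M Q σ = η), g (σ ∘ π)
    = ∑ σ ∈ univ.filter (fun σ : Fin (M*Q) → Bool => cg M Q σ = η), g σ := by
  classical
  refine Finset.sum_nbij' (fun σ => σ ∘ π) (fun σ => σ ∘ π.symm) ?_ ?_ ?_ ?_ (fun a _ => rfl)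
  · intro σ hσ
    simp only [Finset.mem_filter, Finset.mem_univ, true_and] at hσ ⊢
    rw [cg_comp σ π hπ]; exact hσ
  · intro σ hσ
    simp only [Finset.mem_filter, Finset.mem_univ, true_and] at hσ ⊢
    have hπ' : ∀ x : Fin (M*Q), ((π.symm x : Fin (M*Q)) : ℕ) / Q = (x : ℕ) / Q := by
      intro x
      conv_rhs => rw [← Equiv.apply_symm_apply π x]
      exact (hπ _).symm
    rw [cg_comp σ π.symm hπ']; exact hσ
  · intro σ _; funext x; simp
  · intro σ _; funext x; simp

/-- The fiber correlation sum. -/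
noncomputable def SS (M Q : ℕ) (η : Fin M → ℤ) (x y : Fin (M*Q)) : ℝ :=
  ∑ σ ∈ univ.filter (fun σ : Fin (M*Q) → Bool => cg M Q σ = η),
    (spin (σ x) : ℝ) * (spin (σ y) : ℝ)

lemma SS_perm (η : Fin M → ℤ) (π : Equiv.Perm (Fin (M*Q)))
    (hπ : ∀ x : Fin (M*Q), ((π x : Fin (M*Q)) : ℕ) / Q = (x : ℕ) / Q)
    (x y : Fin (M*Q)) : SS M Q η (π x) (π y) = SS M Q η x y := by
  unfold SS
  exact sum_comp_perm (fun σ => (spin (σ x) : ℝ) * (spin (σ y) : ℝ)) π hπ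

lemma SS_const (η : Fin M → ℤ) {x y x' y' : Fin (M*Q)}
    (hx : (x : ℕ) / Q = (x' : ℕ) / Q) (hy : (y : ℕ) / Q = (y' : ℕ) / Q)
    (hxy : x ≠ y) (hxy' : x' ≠ y') : SS M Q η x y = SS M Q η x' y' := by
  classical
  set π1 := Equiv.swap x x' with hπ1
  set y1 := π1 y with hy1
  set π2 := Equiv.swap y1 y' with hπ2
  have hy1x' : y1 ≠ x' := by
    intro h
    have : y = x := by
      have := congrArg π1 h
      simpa [hy1, hπ1, Equiv.swap_apply_right] using this
    exact hxy this.symm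
  have hy1cell : (y1 : ℕ) / Q = (y' : ℕ) / Q := by
    rw [hy1, hπ1]
    rcases eq_or_ne y x with rfl | h1
    · exact absurd rfl hxy
    rcases eq_or_ne y x' with rfl | h2
    · rw [Equiv.swap_apply_right]
      rw [hx] at *
      omega
    · rw [Equiv.swap_apply_of_ne_of_ne h1 h2]; exact hy
  set π := π1.trans π2 with hπ
  have hcell : ∀ z : Fin (M*Q), ((π z : Fin (M*Q)) : ℕ) / Q = (z : ℕ) / Q := by
    intro z
    have h1 := swap_cell x x' hx z
    have h2 := swap_cell y1 y' hy1cell (π1 z)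
    simpa [hπ, hπ1, hπ2] using h2.trans h1
  have hπx : π x = x' := by
    simp only [hπ, Equiv.trans_apply, hπ1, Equiv.swap_apply_left]
    exact Equiv.swap_apply_of_ne_of_ne hy1x'.symm hxy'
  have hπy : π y = y' := by
    simp only [hπ, Equiv.trans_apply, ← hy1, hπ2, Equiv.swap_apply_left]
  calc SS M Q η x y = SS M Q η (π x) (π y) := (SS_perm η π hcell x y).symm
    _ = SS M Q η x' y' := by rw [hπx, hπy]

lemma spin_mul_self (b : Bool) : (spin b : ℝ) * (spin b : ℝ) = 1 := by
  cases b <;> simp [spin]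

lemma cg_cast (σ : Fin (M*Q) → Bool) (k : Fin M) :
    ((cg M Q σ k : ℤ) : ℝ) = ∑ x ∈ cell M Q k, (spin (σ x) : ℝ) := by
  unfold cg; push_cast; rfl

lemma cell_pair_sum (σ : Fin (M*Q) → Bool) (k : Fin M) :
    ∑ x' ∈ cell M Q k, ∑ y' ∈ (cell M Q k).filter (fun y' => y' ≠ x'),
      (spin (σ x') : ℝ) * (spin (σ y') : ℝ)
    = ((cg M Q σ k : ℤ) : ℝ) ^ 2 - ((cell M Q k).card : ℝ) := by
  classical
  have h : ∀ x' ∈ cell M Q k,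
      ∑ y' ∈ (cell M Q k).filter (fun y' => y' ≠ x'),
        (spin (σ x') : ℝ) * (spin (σ y') : ℝ)
      = (spin (σ x') : ℝ) * ((cg M Q σ k : ℤ) : ℝ) - 1 := by
    intro x' hx'
    rw [Finset.filter_ne', Finset.sum_erase_eq_sub hx', ← Finset.mul_sum, ← cg_cast,
      spin_mul_self]
  rw [Finset.sum_congr rfl h, Finset.sum_sub_distrib, ← Finset.sum_mul, ← cg_cast, sq,
    Finset.sum_const, nsmul_eq_mul, mul_one]

lemma SS_offdiag (η : Fin M → ℤ) {k l : Fin M} (hkl : k ≠ l) {x y : Fin (M*Q)}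
    (hx : x ∈ cell M Q k) (hy : y ∈ cell M Q l) (hQ : 0 < Q) :
    SS M Q η x y
    = (((univ.filter (fun σ : Fin (M*Q) → Bool => cg M Q σ = η)).card : ℝ)
        * (η k : ℝ) * (η l : ℝ)) / (Q : ℝ) ^ 2 := by
  classical
  have hne : x ≠ y := by
    intro h; subst h
    exact hkl (Fin.ext ((mem_cell.1 hx).symm.trans (mem_cell.1 hy)))
  have hT : ∑ x' ∈ cell M Q k, ∑ y' ∈ cell M Q l, SS M Q η x' y'
      = (Q : ℝ)^2 * SS M Q η x y := by
    have : ∀ x' ∈ cell M Q k, ∀ y' ∈ cell M Q l, SS M Q η x' y' = SS M Q η x y := by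
      intro x' hx' y' hy'
      have hne' : x' ≠ y' := by
        intro h; subst h
        exact hkl (Fin.ext ((mem_cell.1 hx').symm.trans (mem_cell.1 hy')))
      exact SS_const η ((mem_cell.1 hx').trans (mem_cell.1 hx).symm)
        ((mem_cell.1 hy').trans (mem_cell.1 hy).symm) hne' hne
    rw [Finset.sum_congr rfl (fun x' hx' => Finset.sum_congr rfl (this x' hx'))]
    simp [Finset.sum_const, cell_card hQ, sq]
    ring
  have hT2 : ∑ x' ∈ cell M Q k, ∑ y' ∈ cell M Q l, SS M Q η x' y'
      = ((univ.filter (fun σ : Fin (M*Q) → Bool => cg M Q σ = η)).card : ℝ)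
        * (η k : ℝ) * (η l : ℝ) := by
    unfold SS
    rw [Finset.sum_congr rfl (fun x' _ => Finset.sum_comm), Finset.sum_comm]
    have hσ : ∀ σ ∈ univ.filter (fun σ : Fin (M*Q) → Bool => cg M Q σ = η),
        ∑ x' ∈ cell M Q k, ∑ y' ∈ cell M Q l, (spin (σ x') : ℝ) * (spin (σ y') : ℝ)
        = (η k : ℝ) * (η l : ℝ) := by
      intro σ hσ
      rw [Finset.mem_filter] at hσ
      rw [← Finset.sum_mul_sum, ← cg_cast, ← cg_cast, hσ.2]
    rw [Finset.sum_congr rfl hσ, Finset.sum_const, nsmul_eq_mul]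
    ring
  have := hT2.symm.trans hT
  rw [eq_div_iff (by positivity)]
  linarith

lemma SS_diag (η : Fin M → ℤ) {k : Fin M} {x y : Fin (M*Q)}
    (hx : x ∈ cell M Q k) (hy : y ∈ cell M Q k) (hxy : x ≠ y) (hQ : 2 ≤ Q) :
    SS M Q η x y
    = (((univ.filter (fun σ : Fin (M*Q) → Bool => cg M Q σ = η)).card : ℝ)
        * ((η k : ℝ) ^ 2 - (Q : ℝ))) / ((Q : ℝ) * ((Q : ℝ) - 1)) := by
  classical
  have hQ0 : 0 < Q := by omega
  have hT : ∑ x' ∈ cell M Q k, ∑ y' ∈ (cell M Q k).filter (fun y' => y' ≠ x'), SS M Q η x' y'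
      = (Q : ℝ) * ((Q : ℝ) - 1) * SS M Q η x y := by
    have hc : ∀ x' ∈ cell M Q k, ∀ y' ∈ (cell M Q k).filter (fun y' => y' ≠ x'),
        SS M Q η x' y' = SS M Q η x y := by
      intro x' hx' y' hy'
      rw [Finset.mem_filter] at hy'
      exact SS_const η ((mem_cell.1 hx').trans (mem_cell.1 hx).symm)
        ((mem_cell.1 hy'.1).trans (mem_cell.1 hy).symm) hy'.2.symm hxy
    rw [Finset.sum_congr rfl (fun x' hx' => Finset.sum_congr rfl (hc x' hx'))]
    have hcard : ∀ x' ∈ cell M Q k, ((cell M Q k).filter (fun y' => y' ≠ x')).card = Q - 1 := by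
      intro x' hx'
      rw [Finset.filter_ne', Finset.card_erase_of_mem hx', cell_card hQ0]
    rw [Finset.sum_congr rfl (fun x' hx' => by rw [Finset.sum_const, hcard x' hx']),
      Finset.sum_const, cell_card hQ0]
    simp only [nsmul_eq_mul]
    have : ((Q - 1 : ℕ) : ℝ) = (Q : ℝ) - 1 := by
      have : (1:ℕ) ≤ Q := by omega
      push_cast [Nat.cast_sub this]
      ring
    rw [this]; ring
  have hT2 : ∑ x' ∈ cell M Q k, ∑ y' ∈ (cell M Q k).filter (fun y' => y' ≠ x'), SS M Q η x' y'
      = ((univ.filter (fun σ : Fin (M*Q) → Bool => cg M Q σ = η)).card : ℝ)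
        * ((η k : ℝ) ^ 2 - (Q : ℝ)) := by
    unfold SS
    rw [Finset.sum_congr rfl (fun x' _ => Finset.sum_comm), Finset.sum_comm]
    have hσ : ∀ σ ∈ univ.filter (fun σ : Fin (M*Q) → Bool => cg M Q σ = η),
        ∑ x' ∈ cell M Q k, ∑ y' ∈ (cell M Q k).filter (fun y' => y' ≠ x'),
          (spin (σ x') : ℝ) * (spin (σ y') : ℝ)
        = (η k : ℝ) ^ 2 - (Q : ℝ) := by
      intro σ hσ
      rw [Finset.mem_filter] at hσ
      rw [cell_pair_sum, hσ.2, cell_card hQ0]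
    rw [Finset.sum_congr rfl hσ, Finset.sum_const, nsmul_eq_mul]
  have h := hT2.symm.trans hT
  have hQ1 : (1:ℝ) < (Q:ℝ) := by exact_mod_cast hQ.trans_lt' one_lt_two -- probe
  rw [eq_div_iff (by nlinarith)]
  linarith

lemma sum_fiber (hQ : 0 < Q) (f : Fin (M*Q) → ℝ) :
    ∑ x : Fin (M*Q), f x = ∑ k : Fin M, ∑ x ∈ cell M Q k, f x := by
  classical
  rw [← Finset.sum_fiberwise univ
    (fun x : Fin (M*Q) => (⟨x.val / Q, cellOf_lt hQ x⟩ : Fin M)) f]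
  refine Finset.sum_congr rfl fun k _ => Finset.sum_congr ?_ fun _ _ => rfl
  ext x
  simp [cell, Fin.ext_iff]

lemma sum_fiber_ne (hQ : 0 < Q) (x : Fin (M*Q)) (f : Fin (M*Q) → ℝ) :
    ∑ y ∈ univ.filter (fun y => y ≠ x), f y
    = ∑ l : Fin M, ∑ y ∈ (cell M Q l).filter (fun y => y ≠ x), f y := by
  classical
  rw [← Finset.sum_fiberwise (univ.filter (fun y => y ≠ x))
    (fun y : Fin (M*Q) => (⟨y.val / Q, cellOf_lt hQ y⟩ : Fin M)) f]
  refine Finset.sum_congr rfl fun l _ => Finset.sum_congr ?_ fun _ _ => rfl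
  ext y
  simp only [Finset.mem_filter, Finset.mem_univ, true_and, cell, Fin.ext_iff]
  tauto
end Aux

/-- the conditional expectation of the long-range Hamiltonian given the
coarse configuration equals the coarse-grained long-range Hamiltonian. -/
theorem statement4 (M Q : ℕ) (hM : 1 ≤ M) (hQ : 2 ≤ Q)
    (J : ℤ → ℝ) (hJ : ∀ r, J (-r) = J r) (η : Fin M → ℤ)
    (hne : (univ.filter (fun σ : Fin (M * Q) → Bool => cg M Q σ = η)).Nonempty) :
    (∑ σ ∈ univ.filter (fun σ : Fin (M * Q) → Bool => cg M Q σ = η), Hlong M Q J σ) /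
      ((univ.filter (fun σ : Fin (M * Q) → Bool => cg M Q σ = η)).card : ℝ)
    = Hlong0 M Q J η := by
  classical
  have hQ0 : 0 < Q := by omega
  set A := univ.filter (fun σ : Fin (M * Q) → Bool => cg M Q σ = η) with hA
  set n : ℝ := (A.card : ℝ) with hn
  have hnpos : (0:ℝ) < n := by
    rw [hn]
    exact_mod_cast Finset.card_pos.2 hne
  suffices h : ∑ σ ∈ A, Hlong M Q J σ = n * Hlong0 M Q J η by
    rw [h, mul_comm, mul_div_assoc, div_self (ne_of_gt hnpos), mul_one]
  -- Step 1: pull the sum over σ inside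
  have step1 : ∑ σ ∈ A, Hlong M Q J σ
      = -(1/2) * ∑ x : Fin (M*Q), ∑ y ∈ univ.filter (fun y => y ≠ x),
          J ((x.val : ℤ) - (y.val : ℤ)) * SS M Q η x y := by
    unfold Hlong
    rw [← Finset.mul_sum]
    congr 1
    rw [Finset.sum_comm]
    refine Finset.sum_congr rfl fun x _ => ?_
    rw [Finset.sum_comm]
    refine Finset.sum_congr rfl fun y _ => ?_
    unfold SS
    rw [Finset.mul_sum]
    exact Finset.sum_congr rfl fun σ _ => by ring
  -- Step 2: decompose into cells
  have step2 : ∑ x : Fin (M*Q), ∑ y ∈ univ.filter (fun y => y ≠ x),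
          J ((x.val : ℤ) - (y.val : ℤ)) * SS M Q η x y
      = ∑ k : Fin M, ∑ l : Fin M, ∑ x ∈ cell M Q k,
          ∑ y ∈ (cell M Q l).filter (fun y => y ≠ x),
            J ((x.val : ℤ) - (y.val : ℤ)) * SS M Q η x y := by
    rw [sum_fiber hQ0]
    refine Finset.sum_congr rfl fun k _ => ?_
    rw [Finset.sum_congr rfl (fun x _ => sum_fiber_ne hQ0 x _)]
    exact Finset.sum_comm
  -- Step 3: evaluate diagonal blocks
  have diagval : ∀ k : Fin M,
      ∑ x ∈ cell M Q k, ∑ y ∈ (cell M Q k).filter (fun y => y ≠ x),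
          J ((x.val : ℤ) - (y.val : ℤ)) * SS M Q η x y
      = n * (Jbar M Q J k k * ((η k : ℝ)^2 - (Q:ℝ))) := by
    intro k
    have hval : ∀ x ∈ cell M Q k, ∀ y ∈ (cell M Q k).filter (fun y => y ≠ x),
        J ((x.val : ℤ) - (y.val : ℤ)) * SS M Q η x y
        = J ((x.val : ℤ) - (y.val : ℤ)) *
            ((n * ((η k : ℝ)^2 - (Q:ℝ))) / ((Q:ℝ) * ((Q:ℝ) - 1))) := by
      intro x hx y hy
      rw [Finset.mem_filter] at hy
      rw [SS_diag η hx hy.1 hy.2.symm hQ]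
    rw [Finset.sum_congr rfl (fun x hx => Finset.sum_congr rfl (hval x hx))]
    simp only [← Finset.sum_mul]
    rw [Jbar, if_pos rfl]
    ring
  -- Step 4: evaluate off-diagonal blocks
  have offval : ∀ k l : Fin M, l ≠ k →
      ∑ x ∈ cell M Q k, ∑ y ∈ (cell M Q l).filter (fun y => y ≠ x),
          J ((x.val : ℤ) - (y.val : ℤ)) * SS M Q η x y
      = n * (Jbar M Q J k l * (η k : ℝ) * (η l : ℝ)) := by
    intro k l hlk
    have hfe : ∀ x ∈ cell M Q k,
        (cell M Q l).filter (fun y => y ≠ x) = cell M Q l := by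
      intro x hx
      refine Finset.filter_true_of_mem fun y hy => ?_
      intro hcon
      subst hcon
      exact hlk (Fin.ext ((mem_cell.1 hy).symm.trans (mem_cell.1 hx)))
    have hval : ∀ x ∈ cell M Q k, ∀ y ∈ cell M Q l,
        J ((x.val : ℤ) - (y.val : ℤ)) * SS M Q η x y
        = J ((x.val : ℤ) - (y.val : ℤ)) *
            ((n * (η k : ℝ) * (η l : ℝ)) / (Q:ℝ)^2) := by
      intro x hx y hy
      rw [SS_offdiag η hlk.symm hx hy hQ0]
    have hsum : ∑ x ∈ cell M Q k, ∑ y ∈ (cell M Q l).filter (fun y => y ≠ x),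
          J ((x.val : ℤ) - (y.val : ℤ)) * SS M Q η x y
        = ∑ x ∈ cell M Q k, ∑ y ∈ cell M Q l,
            J ((x.val : ℤ) - (y.val : ℤ)) *
              ((n * (η k : ℝ) * (η l : ℝ)) / (Q:ℝ)^2) := by
      refine Finset.sum_congr rfl fun x hx => ?_
      rw [hfe x hx]
      exact Finset.sum_congr rfl (hval x hx)
    rw [hsum]
    simp only [← Finset.sum_mul]
    rw [Jbar, if_neg (fun h => hlk h.symm)]
    ring
  -- Step 5: assemble
  rw [step1, step2]
  have split : ∀ k : Fin M,
      ∑ l : Fin M, ∑ x ∈ cell M Q k,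
          ∑ y ∈ (cell M Q l).filter (fun y => y ≠ x),
            J ((x.val : ℤ) - (y.val : ℤ)) * SS M Q η x y
      = n * (Jbar M Q J k k * ((η k : ℝ)^2 - (Q:ℝ)))
        + ∑ l ∈ univ.filter (fun l => l ≠ k),
            n * (Jbar M Q J k l * (η k : ℝ) * (η l : ℝ)) := by
    intro k
    rw [Finset.filter_ne']
    rw [← Finset.add_sum_erase _ _ (Finset.mem_univ k), diagval k]
    congr 1
    exact Finset.sum_congr rfl fun l hl =>
      offval k l (Finset.ne_of_mem_erase hl)
  rw [Finset.sum_congr rfl (fun k _ => split k), Finset.sum_add_distrib]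
  simp only [← Finset.mul_sum]
  unfold Hlong0
  ring
end

section
/- Suppose J(r) = (1/L) V(|r|/L) for a real L > 0 and a function V : [0,∞) → ℝ that is Lipschitz continuous with Lipschitz constant ℓ. Then for all coarse cells k, l (including k = l) and all x ∈ C_k, y ∈ C_l with x ≠ y, the deviation of the coupling from its cell average satisfies |J(x−y) − J̄(k,l)| ≤ 2Qℓ/L². -/
open Finset

/-!
In both the diagonal and the off-diagonal case, `J̄(k,l)` is the mean of `J(a - b)` over the
pairs `a ≠ b` of `C_k × C_l`, and `(x, y)` is one of these pairs, so it suffices to bound each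
`|J(x - y) - J(a - b)|`. The separations `x - y` and `a - b` differ by less than `2Q`, and
`r ↦ L⁻¹ V(|r|/L)` is `ℓ/L²`-Lipschitz because `r ↦ |r|` is 1-Lipschitz.
-/

lemma abs_sub_sum_div_card_le {α : Type*} {s : Finset α} (hs : s.Nonempty) {f : α → ℝ}
    {a B : ℝ} (h : ∀ p ∈ s, |a - f p| ≤ B) : |a - (∑ p ∈ s, f p) / #s| ≤ B := by
  have hcard : (0 : ℝ) < #s := by exact_mod_cast hs.card_pos
  have hsub : a - (∑ p ∈ s, f p) / #s = (∑ p ∈ s, (a - f p)) / #s := by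
    rw [sum_sub_distrib, sum_const, nsmul_eq_mul]
    field_simp
  rw [hsub, abs_div, abs_of_pos hcard, div_le_iff₀ hcard]
  calc |∑ p ∈ s, (a - f p)| ≤ ∑ p ∈ s, |a - f p| := abs_sum_le_sum_abs _ _
    _ ≤ #s • B := sum_le_card_nsmul _ _ _ h
    _ = B * #s := by rw [nsmul_eq_mul, mul_comm]

lemma abs_sub_le_of_lipschitz_radial {L l : ℝ} (hL : 0 < L) (hl : 0 ≤ l) {V : ℝ → ℝ}
    (hV : ∀ a b : ℝ, 0 ≤ a → 0 ≤ b → |V a - V b| ≤ l * |a - b|) (r r' : ℝ) :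
    |1 / L * V (|r| / L) - 1 / L * V (|r'| / L)| ≤ l * |r - r'| / L ^ 2 := by
  have hradial : |(|r| / L - |r'| / L)| ≤ |r - r'| / L := by
    rw [← sub_div, abs_div, abs_of_pos hL]
    exact div_le_div_of_nonneg_right (abs_abs_sub_abs_le_abs_sub r r') hL.le
  calc |1 / L * V (|r| / L) - 1 / L * V (|r'| / L)|
      = |V (|r| / L) - V (|r'| / L)| / L := by
        rw [← mul_sub, abs_mul, abs_of_pos (one_div_pos.2 hL), one_div_mul_eq_div]
    _ ≤ l * (|r - r'| / L) / L := by
        gcongr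
        exact (hV _ _ (by positivity) (by positivity)).trans (by gcongr)
    _ = l * |r - r'| / L ^ 2 := by ring

lemma mem_cell_iff {M Q : ℕ} {k : Fin M} {x : Fin (M * Q)} :
    x ∈ cell M Q k ↔ k.val * Q ≤ x.val ∧ x.val < k.val * Q + Q := by
  have hQ : 0 < Q := Nat.pos_of_mul_pos_left x.pos
  rw [cell, mem_filter, Nat.div_eq_iff hQ]
  simp only [mem_univ, true_and]
  omega

lemma card_cell (M Q : ℕ) (k : Fin M) : #(cell M Q k) = Q := by
  have hmap : (cell M Q k).map Fin.valEmbedding = Ico (k.val * Q) (k.val * Q + Q) := by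
    ext n
    simp only [mem_map, Fin.valEmbedding_apply, mem_Ico]
    constructor
    · rintro ⟨x, hx, rfl⟩
      exact mem_cell_iff.1 hx
    · intro hn
      have hnMQ : n < M * Q := by nlinarith [k.isLt]
      exact ⟨⟨n, hnMQ⟩, mem_cell_iff.2 hn, rfl⟩
  rw [← card_map, hmap, Nat.card_Ico, Nat.add_sub_cancel_left]

lemma abs_sub_le_of_mem_cell {M Q : ℕ} {k : Fin M} {x y : Fin (M * Q)}
    (hx : x ∈ cell M Q k) (hy : y ∈ cell M Q k) : |(x.val : ℝ) - y.val| ≤ Q := by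
  rw [mem_cell_iff] at hx hy
  rw [abs_sub_le_iff, sub_le_iff_le_add, sub_le_iff_le_add]
  constructor <;> norm_cast <;> omega

def cellPairs (M Q : ℕ) (k l : Fin M) : Finset (Fin (M * Q) × Fin (M * Q)) :=
  (cell M Q k ×ˢ cell M Q l).filter fun p => p.1 ≠ p.2

lemma Jbar_eq_sum_div_card (M Q : ℕ) (J : ℤ → ℝ) (k l : Fin M) :
    Jbar M Q J k l =
      (∑ p ∈ cellPairs M Q k l, J ((p.1.val : ℤ) - p.2.val)) / #(cellPairs M Q k l) := by
  unfold Jbar cellPairs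
  split_ifs with hkl
  · subst hkl
    have hoff :
        (cell M Q k ×ˢ cell M Q k).filter (fun p => p.1 ≠ p.2) = (cell M Q k).offDiag := by
      ext p
      simp only [mem_filter, mem_product, mem_offDiag, and_assoc]
    rw [hoff, offDiag_card, card_cell, ← hoff, sum_filter, sum_product]
    simp_rw [sum_filter, ne_comm]
    push_cast [Nat.le_mul_self Q]
    ring
  · have hdisj : ∀ p ∈ cell M Q k ×ˢ cell M Q l, p.1 ≠ p.2 := by
      rintro ⟨x, y⟩ hp (rfl : x = y)
      simp only [cell, mem_product, mem_filter, mem_univ, true_and] at hp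
      exact hkl (Fin.ext (hp.1.symm.trans hp.2))
    rw [filter_true_of_mem hdisj, sum_product, card_product, card_cell, card_cell]
    push_cast
    ring

theorem statement6_general (M Q : ℕ)
    (L l : ℝ) (hL : 0 < L) (hl : 0 ≤ l)
    (V : ℝ → ℝ) (hV : ∀ a b : ℝ, 0 ≤ a → 0 ≤ b → |V a - V b| ≤ l * |a - b|)
    (J : ℤ → ℝ) (hJ : ∀ r : ℤ, J r = (1 / L) * V (|(r : ℝ)| / L)) :
    ∀ k l' : Fin M, ∀ x ∈ cell M Q k, ∀ y ∈ cell M Q l', x ≠ y →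
      |J ((x.val : ℤ) - (y.val : ℤ)) - Jbar M Q J k l'| ≤ 2 * Q * l / L ^ 2 := by
  intro k l' x hx y hy hxy
  have hxy_mem : (x, y) ∈ cellPairs M Q k l' := mem_filter.2 ⟨mem_product.2 ⟨hx, hy⟩, hxy⟩
  rw [Jbar_eq_sum_div_card]
  refine abs_sub_sum_div_card_le ⟨_, hxy_mem⟩ fun p hp => ?_
  obtain ⟨hp1, hp2⟩ := mem_product.1 (mem_filter.1 hp).1
  have hdist : |((x.val : ℝ) - y.val) - (p.1.val - p.2.val)| ≤ Q + Q := by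
    rw [sub_sub_sub_comm]
    exact (abs_sub _ _).trans (add_le_add (abs_sub_le_of_mem_cell hx hp1)
      (abs_sub_le_of_mem_cell hy hp2))
  rw [hJ, hJ]
  push_cast
  calc _ ≤ l * |((x.val : ℝ) - y.val) - (p.1.val - p.2.val)| / L ^ 2 :=
        abs_sub_le_of_lipschitz_radial hL hl hV _ _
    _ ≤ l * (Q + Q) / L ^ 2 := by gcongr
    _ = 2 * Q * l / L ^ 2 := by ring

/-- for `J(r) = L⁻¹ V(|r|/L)` with `V` Lipschitz with constant `ℓ`, the
deviation of the coupling from its cell average is bounded by `2Qℓ/L²`. -/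
theorem statement6 (M Q : ℕ) (hM : 1 ≤ M) (hQ : 2 ≤ Q)
    (L l : ℝ) (hL : 0 < L) (hl : 0 ≤ l)
    (V : ℝ → ℝ) (hV : ∀ a b : ℝ, 0 ≤ a → 0 ≤ b → |V a - V b| ≤ l * |a - b|)
    (J : ℤ → ℝ) (hJ : ∀ r : ℤ, J r = (1 / L) * V (|(r : ℝ)| / L)) :
    ∀ k l' : Fin M, ∀ x ∈ cell M Q k, ∀ y ∈ cell M Q l', x ≠ y →
      |J ((x.val : ℤ) - (y.val : ℤ)) - Jbar M Q J k l'| ≤ 2 * Q * l / L ^ 2 :=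
  statement6_general M Q L l hL hl V hV J hJ
end

section
/- In the single-cell nearest-neighbour setting, the coarse-grained three-body interaction between three adjacent cells with coarse values η₋, η, η₊ satisfies the exact identity E_{P̂_{η₋} ⊗ P̂_{η} ⊗ P̂_{η₊}}[ e^{−βK( τ₋(Q) τ(1) + τ(Q) τ₊(1) )} ] = a² · (1 − λ Φ^Q(η₋) Φ^1(η) − λ Φ^Q(η) Φ^1(η₊) + λ² Φ^Q(η₋) Φ^{1,Q}(η) Φ^1(η₊)), where τ₋, τ, τ₊ denote the configurations in the left, middle and right cells respectively. -/
/-! The bond weight `exp (-βK s s')` with `s s' = ±1` equals `cosh (βK) (1 - tanh (βK) s s')`.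
Expanding the product of the two boundary bonds, every term is a product of functions of the three
separate cells, so the triple sum splits into single-cell moments of the endpoint spins. The
constraints on `η` make every cell nonempty, so each `Ẑ(η)` is positive and can be divided out. -/

open Finset

/-- Configurations of a `Q`-site cell with total magnetization `η`. -/
def cellSet (Q : ℕ) (η : ℤ) : Finset (Fin Q → Bool) :=
  univ.filter (fun τ => ∑ i, spin (τ i) = η)

/-- The first site of the cell. -/
def site1 (Q : ℕ) (hQ : 0 < Q) : Fin Q := ⟨0, hQ⟩

/-- The last site of the cell. -/
def siteQ (Q : ℕ) (hQ : 0 < Q) : Fin Q := ⟨Q - 1, Nat.sub_lt hQ one_pos⟩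

/-- The internal nearest-neighbour Hamiltonian `h(τ) = K Σ_{i=1}^{Q-1} τ(i) τ(i+1)`. -/
noncomputable def hcell (K : ℝ) (Q : ℕ) (τ : Fin Q → Bool) : ℝ :=
  K * ∑ i : Fin (Q - 1),
    ((spin (τ ⟨i.val, by have := i.isLt; omega⟩) : ℝ) *
     (spin (τ ⟨i.val + 1, by have := i.isLt; omega⟩) : ℝ))

/-- The free-boundary single-cell partition function `Ẑ(η)`. -/
noncomputable def Zhat (β K : ℝ) (Q : ℕ) (η : ℤ) : ℝ :=
  ∑ τ ∈ cellSet Q η, Real.exp (-β * hcell K Q τ)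

/-- `Φ^1(η)`: expectation of the first spin under `P̂_η`. -/
noncomputable def Phi1 (β K : ℝ) (Q : ℕ) (hQ : 0 < Q) (η : ℤ) : ℝ :=
  (∑ τ ∈ cellSet Q η, (spin (τ (site1 Q hQ)) : ℝ) * Real.exp (-β * hcell K Q τ)) /
    Zhat β K Q η

/-- `Φ^Q(η)`: expectation of the last spin under `P̂_η`. -/
noncomputable def PhiQ (β K : ℝ) (Q : ℕ) (hQ : 0 < Q) (η : ℤ) : ℝ :=
  (∑ τ ∈ cellSet Q η, (spin (τ (siteQ Q hQ)) : ℝ) * Real.exp (-β * hcell K Q τ)) /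
    Zhat β K Q η

/-- `Φ^{1,Q}(η)`: expectation of the product of the endpoint spins under `P̂_η`. -/
noncomputable def Phi1Q (β K : ℝ) (Q : ℕ) (hQ : 0 < Q) (η : ℤ) : ℝ :=
  (∑ τ ∈ cellSet Q η,
      ((spin (τ (site1 Q hQ)) * spin (τ (siteQ Q hQ)) : ℤ) : ℝ) *
        Real.exp (-β * hcell K Q τ)) /
    Zhat β K Q η

/-- The single-cell partition function with boundary conditions `s₋, s₊ ∈ {-1,0,+1}`
(`0` encoding a free boundary). -/
noncomputable def ZB (β K : ℝ) (Q : ℕ) (hQ : 0 < Q) (η : ℤ) (sm sp : ℝ) : ℝ :=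
  ∑ τ ∈ cellSet Q η,
    Real.exp (-β * (K * sm * (spin (τ (site1 Q hQ)) : ℝ) + hcell K Q τ +
      K * (spin (τ (siteQ Q hQ)) : ℝ) * sp))

lemma exp_neg_mul_spin_mul_spin (x : ℝ) (b c : Bool) :
    Real.exp (-(x * (spin b * spin c))) =
      Real.cosh x * (1 - Real.tanh x * (spin b * spin c)) := by
  have cosh_mul_tanh : Real.cosh x * Real.tanh x = Real.sinh x := by
    rw [Real.tanh_eq_sinh_div_cosh, mul_div_cancel₀ _ (Real.cosh_pos x).ne']
  cases b <;> cases c <;> simp [spin, mul_add, mul_sub, cosh_mul_tanh,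
    Real.cosh_add_sinh, Real.cosh_sub_sinh]

lemma cellSet_nonempty {Q : ℕ} {η : ℤ} (hηQ : |η| ≤ Q) (hpar : (η + Q) % 2 = 0) :
    (cellSet Q η).Nonempty := by
  obtain ⟨k, m, rfl, rfl⟩ : ∃ k m : ℕ, Q = k + m ∧ η = k - m := by
    have := abs_le.mp hηQ
    exact ⟨((η + Q) / 2).toNat, Q - ((η + Q) / 2).toNat, by omega, by omega⟩
  refine ⟨fun i => decide ((i : ℕ) < k), ?_⟩
  simp [cellSet, Fin.sum_univ_add, spin, sub_eq_add_neg]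

lemma Zhat_pos (β K : ℝ) {Q : ℕ} {η : ℤ} (h : (cellSet Q η).Nonempty) :
    0 < Zhat β K Q η :=
  sum_pos (fun _ _ => Real.exp_pos _) h

noncomputable def cellSum (β K : ℝ) (Q : ℕ) (η : ℤ) (f : (Fin Q → Bool) → ℝ) : ℝ :=
  ∑ τ ∈ cellSet Q η, f τ * Real.exp (-β * hcell K Q τ)

section cellSum

variable (β K : ℝ) {Q : ℕ} (hQ : 0 < Q) (η : ℤ)

lemma Zhat_eq_cellSum_one : Zhat β K Q η = cellSum β K Q η 1 := by
  simp [Zhat, cellSum]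

lemma Phi1_eq_cellSum_div :
    Phi1 β K Q hQ η =
      cellSum β K Q η (fun τ => spin (τ (site1 Q hQ))) / cellSum β K Q η 1 := by
  rw [← Zhat_eq_cellSum_one]; rfl

lemma PhiQ_eq_cellSum_div :
    PhiQ β K Q hQ η =
      cellSum β K Q η (fun τ => spin (τ (siteQ Q hQ))) / cellSum β K Q η 1 := by
  rw [← Zhat_eq_cellSum_one]; rfl

lemma Phi1Q_eq_cellSum_div :
    Phi1Q β K Q hQ η =
      cellSum β K Q η (fun τ => spin (τ (site1 Q hQ)) * spin (τ (siteQ Q hQ))) /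
        cellSum β K Q η 1 := by
  simp [Phi1Q, Zhat_eq_cellSum_one, cellSum]

lemma cellSum_mul_cellSum_mul_cellSum (ηm ηp : ℤ) (f g h : (Fin Q → Bool) → ℝ) :
    cellSum β K Q ηm f * cellSum β K Q η g * cellSum β K Q ηp h =
      ∑ τm ∈ cellSet Q ηm, ∑ τ ∈ cellSet Q η, ∑ τp ∈ cellSet Q ηp,
        Real.exp (-β * hcell K Q τm) * Real.exp (-β * hcell K Q τ) *
          Real.exp (-β * hcell K Q τp) * (f τm * g τ * h τp) := by
  simp only [cellSum]
  rw [sum_mul_sum, sum_mul]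
  refine sum_congr rfl fun _ _ => ?_
  rw [sum_mul]
  refine sum_congr rfl fun _ _ => ?_
  rw [mul_sum]
  refine sum_congr rfl fun _ _ => ?_
  ring

lemma sum_three_cells_exp_boundary_eq (ηm ηp : ℤ) :
    let S := cellSum β K Q
    let s1 : (Fin Q → Bool) → ℝ := fun τ => spin (τ (site1 Q hQ))
    let sQ : (Fin Q → Bool) → ℝ := fun τ => spin (τ (siteQ Q hQ))
    (∑ τm ∈ cellSet Q ηm, ∑ τ ∈ cellSet Q η, ∑ τp ∈ cellSet Q ηp,
        Real.exp (-β * hcell K Q τm) * Real.exp (-β * hcell K Q τ) *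
          Real.exp (-β * hcell K Q τp) *
          Real.exp (-β * (K * (sQ τm * s1 τ + sQ τ * s1 τp)))) =
      Real.cosh (β * K) ^ 2 * (S ηm 1 * S η 1 * S ηp 1
        - Real.tanh (β * K) * (S ηm sQ * S η s1 * S ηp 1)
        - Real.tanh (β * K) * (S ηm 1 * S η sQ * S ηp s1)
        + Real.tanh (β * K) ^ 2 * (S ηm sQ * S η (fun τ => s1 τ * sQ τ) * S ηp s1)) := by
  intro S s1 sQ
  simp only [S, cellSum_mul_cellSum_mul_cellSum, ← sum_sub_distrib, ← sum_add_distrib, mul_sum]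
  refine sum_congr rfl fun τm _ => sum_congr rfl fun τ _ => sum_congr rfl fun τp _ => ?_
  rw [show -β * (K * (sQ τm * s1 τ + sQ τ * s1 τp)) =
      -(β * K * (sQ τm * s1 τ)) + -(β * K * (sQ τ * s1 τp)) by ring,
    Real.exp_add, exp_neg_mul_spin_mul_spin, exp_neg_mul_spin_mul_spin]
  simp only [Pi.one_apply]
  ring

end cellSum

/-- the coarse-grained three-body interaction between three adjacent cells
reduces to endpoint correlation functions, with `a = cosh(βK)` and `λ = tanh(βK)`. -/
theorem statement13 (β K : ℝ) (Q : ℕ) (hQ : 2 ≤ Q)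
    (ηm η ηp : ℤ)
    (hηm : |ηm| ≤ (Q : ℤ)) (hη : |η| ≤ (Q : ℤ)) (hηp : |ηp| ≤ (Q : ℤ))
    (hparm : (ηm + Q) % 2 = 0) (hpar : (η + Q) % 2 = 0) (hparp : (ηp + Q) % 2 = 0) :
    (∑ τm ∈ cellSet Q ηm, ∑ τ ∈ cellSet Q η, ∑ τp ∈ cellSet Q ηp,
        Real.exp (-β * hcell K Q τm) * Real.exp (-β * hcell K Q τ) *
          Real.exp (-β * hcell K Q τp) *
          Real.exp (-β * (K * (((spin (τm (siteQ Q (by omega))) : ℝ) *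
              (spin (τ (site1 Q (by omega))) : ℝ)) +
            ((spin (τ (siteQ Q (by omega))) : ℝ) *
              (spin (τp (site1 Q (by omega))) : ℝ))))))
      / (Zhat β K Q ηm * Zhat β K Q η * Zhat β K Q ηp)
    = Real.cosh (β * K) ^ 2 *
        (1 - Real.tanh (β * K) * PhiQ β K Q (by omega) ηm * Phi1 β K Q (by omega) η
           - Real.tanh (β * K) * PhiQ β K Q (by omega) η * Phi1 β K Q (by omega) ηp
           + Real.tanh (β * K) ^ 2 * PhiQ β K Q (by omega) ηm *
               Phi1Q β K Q (by omega) η * Phi1 β K Q (by omega) ηp) := by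
  have hQ0 : 0 < Q := by omega
  have hZm := Zhat_pos β K (cellSet_nonempty hηm hparm)
  have hZ := Zhat_pos β K (cellSet_nonempty hη hpar)
  have hZp := Zhat_pos β K (cellSet_nonempty hηp hparp)
  rw [sum_three_cells_exp_boundary_eq β K hQ0 η ηm ηp]
  simp only [Phi1_eq_cellSum_div β K hQ0, PhiQ_eq_cellSum_div β K hQ0,
    Phi1Q_eq_cellSum_div β K hQ0, Zhat_eq_cellSum_one] at hZm hZ hZp ⊢
  field_simp
end

section
/- In the one-dimensional periodic coarse-graining setting with M even: for every coarse configuration η ∈ ℤ^M with F⁻¹(η) ≠ ∅ and every σ with F(σ) = η, the multiscale decomposition of the short-range Gibbs weight holds exactly: e^{−βH^s(σ)} P(σ|η) = R(η) · ∏_{k odd} (1 + f^s_{k−1,k+1}(η(k); σ^{k−1}, σ^{k+1})) · ν(σ|η), where H^s = Σ_k H_k + Σ_k W_{k,k+1}, P(·|η) is the uniform measure on {σ : F(σ)=η}, R(η) = ∏_{k odd} Z_k(η(k); 0, 0)^{−1} · ∏_{k even} Z_{k−1,k,k+1}(η; 0, 0), and f^s_{k−1,k+1}(η(k); σ^{k−1},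 σ^{k+1}) = Z_k(η(k); σ^{k−1}, σ^{k+1}) Z_k(η(k); 0, 0) / ( Z_k(η(k); 0, σ^{k+1}) Z_k(η(k); σ^{k−1}, 0) ) − 1. -/
open Finset

/-- Configurations of the coarse cell `C_k` with total magnetization `m`. -/
def cellCfgs (M Q : ℕ) (k : Fin M) (m : ℤ) :
    Finset ({x : Fin (M * Q) // x ∈ cell M Q k} → Bool) :=
  univ.filter (fun τ => ∑ x, spin (τ x) = m)

/-- The configuration obtained from `σ` by replacing its values on the cell `C_k`
by the cell configuration `τ`. -/
def upd (M Q : ℕ) (k : Fin M) (σ : Fin (M * Q) → Bool)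
    (τ : {x : Fin (M * Q) // x ∈ cell M Q k} → Bool) : Fin (M * Q) → Bool :=
  fun x => if h : x ∈ cell M Q k then τ ⟨x, h⟩ else σ x

noncomputable section

variable (M Q : ℕ) [NeZero M] (β : ℝ)
  (HK WK : Fin M → (Fin (M * Q) → Bool) → ℝ) (η : Fin M → ℤ)

/-- `Z_k(η(k); σ^{k-1}, σ^{k+1})`: the single-cell partition function of `C_k` with
boundary conditions given by `σ` on the neighbouring cells (cell indices mod `M`). -/
def Zfull (k : Fin M) (σ : Fin (M * Q) → Bool) : ℝ :=
  (∑ τ ∈ cellCfgs M Q k (η k),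
      Real.exp (-β * (WK (k - 1) (upd M Q k σ τ) + HK k (upd M Q k σ τ) +
        WK k (upd M Q k σ τ))))
    / ((cellCfgs M Q k (η k)).card : ℝ)

/-- `Z_k(η(k); σ^{k-1}, 0)`: boundary condition on the left, free on the right. -/
def ZfreeR (k : Fin M) (σ : Fin (M * Q) → Bool) : ℝ :=
  (∑ τ ∈ cellCfgs M Q k (η k),
      Real.exp (-β * (WK (k - 1) (upd M Q k σ τ) + HK k (upd M Q k σ τ))))
    / ((cellCfgs M Q k (η k)).card : ℝ)

/-- `Z_k(η(k); 0, σ^{k+1})`: free on the left, boundary condition on the right. -/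
def ZfreeL (k : Fin M) (σ : Fin (M * Q) → Bool) : ℝ :=
  (∑ τ ∈ cellCfgs M Q k (η k),
      Real.exp (-β * (HK k (upd M Q k σ τ) + WK k (upd M Q k σ τ))))
    / ((cellCfgs M Q k (η k)).card : ℝ)

/-- `Z_k(η(k); 0, 0)`: the free-boundary single-cell partition function. -/
def Zzero (k : Fin M) : ℝ :=
  (∑ τ ∈ cellCfgs M Q k (η k),
      Real.exp (-β * HK k (upd M Q k (fun _ => false) τ)))
    / ((cellCfgs M Q k (η k)).card : ℝ)

/-- `Z_{k-1,k,k+1}(η; 0, 0)`: the three-cell free-boundary partition function. -/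
def Z3 (k : Fin M) : ℝ :=
  (∑ τm ∈ cellCfgs M Q (k - 1) (η (k - 1)), ∑ τ ∈ cellCfgs M Q k (η k),
      ∑ τp ∈ cellCfgs M Q (k + 1) (η (k + 1)),
      (let ρ := upd M Q (k + 1)
          (upd M Q k (upd M Q (k - 1) (fun _ => false) τm) τ) τp
       Real.exp (-β * (HK (k - 1) ρ + WK (k - 1) ρ + HK k ρ + WK k ρ + HK (k + 1) ρ))))
    / (((cellCfgs M Q (k - 1) (η (k - 1))).card : ℝ) *
       ((cellCfgs M Q k (η k)).card : ℝ) *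
       ((cellCfgs M Q (k + 1) (η (k + 1))).card : ℝ))

/-- The reference conditional measure `ν(σ|η)` of the multiscale decomposition. -/
def nuM (σ : Fin (M * Q) → Bool) : ℝ :=
  (∏ k ∈ univ.filter (fun k : Fin M => k.val % 2 = 1),
      Real.exp (-β * (HK k σ + WK (k - 1) σ + WK k σ)) / Zfull M Q β HK WK η k σ
        / ((cellCfgs M Q k (η k)).card : ℝ))
  *
  ∏ k ∈ univ.filter (fun k : Fin M => k.val % 2 = 0),
      Real.exp (-β * HK k σ) * ZfreeR M Q β HK WK η (k + 1) σ *
          ZfreeL M Q β HK WK η (k - 1) σ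
        / Z3 M Q β HK WK η k / ((cellCfgs M Q k (η k)).card : ℝ)

/-- The short-range error term `f^s_{k-1,k+1}(η(k); σ^{k-1}, σ^{k+1})`. -/
def fsOdd (k : Fin M) (σ : Fin (M * Q) → Bool) : ℝ :=
  Zfull M Q β HK WK η k σ * Zzero M Q β HK η k /
    (ZfreeL M Q β HK WK η k σ * ZfreeR M Q β HK WK η k σ) - 1

end

/-! Both sides are products of the same local Boltzmann factors once every partition function is
cancelled: for odd `k`, `1 + f^s` trades `Z_k(σ^{k-1}, σ^{k+1})` for the two half-free partition
functions of cell `k`, which are exactly the factors that `ν` attaches to its even neighbours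
`k - 1` and `k + 1`; on a cycle of even length this pairing is a bijection. What remains is
`e^{-βH^s(σ)}` divided by the number of configurations with coarse profile `η`, which factorises
over the cells. -/

section Parity

variable {M : ℕ}

def evenSites (M : ℕ) : Finset (Fin M) := univ.filter fun k => k.val % 2 = 0

def oddSites (M : ℕ) : Finset (Fin M) := univ.filter fun k => k.val % 2 = 1

theorem prod_evenSites_mul_prod_oddSites {α : Type*} [CommMonoid α] (f : Fin M → α) :
    (∏ k ∈ evenSites M, f k) * ∏ k ∈ oddSites M, f k = ∏ k, f k := by
  have hodd : oddSites M = univ.filter fun k => ¬k.val % 2 = 0 :=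
    filter_congr fun k _ => by omega
  rw [hodd, evenSites, prod_filter_mul_prod_filter_not]

variable [NeZero M]

theorem Fin.val_add_one_mod_two_of_even (hM : Even M) (k : Fin M) :
    (k + 1).val % 2 = (k.val + 1) % 2 := by
  have h2 : 2 ∣ M := even_iff_two_dvd.1 hM
  rw [Fin.val_add, Nat.mod_mod_of_dvd _ h2, Fin.val_one', Nat.add_mod, Nat.mod_mod_of_dvd _ h2,
    ← Nat.add_mod]

theorem add_one_mem_oddSites_iff (hM : Even M) {k : Fin M} :
    k + 1 ∈ oddSites M ↔ k ∈ evenSites M := by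
  simp only [oddSites, evenSites, mem_filter, mem_univ, true_and,
    Fin.val_add_one_mod_two_of_even hM]
  omega

theorem add_one_mem_evenSites_iff (hM : Even M) {k : Fin M} :
    k + 1 ∈ evenSites M ↔ k ∈ oddSites M := by
  simp only [oddSites, evenSites, mem_filter, mem_univ, true_and,
    Fin.val_add_one_mod_two_of_even hM]
  omega

variable {α : Type*} [CommMonoid α]

theorem prod_evenSites_comp_add_one (hM : Even M) (f : Fin M → α) :
    ∏ k ∈ evenSites M, f (k + 1) = ∏ k ∈ oddSites M, f k :=
  prod_equiv (Equiv.addRight 1) (fun _ => (add_one_mem_oddSites_iff hM).symm) fun _ _ => rfl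

theorem prod_evenSites_comp_sub_one (hM : Even M) (f : Fin M → α) :
    ∏ k ∈ evenSites M, f (k - 1) = ∏ k ∈ oddSites M, f k :=
  prod_equiv (Equiv.subRight 1)
    (fun k => by rw [← add_one_mem_evenSites_iff hM, Equiv.subRight_apply, sub_add_cancel])
    fun _ _ => rfl

theorem prod_oddSites_comp_sub_one (hM : Even M) (f : Fin M → α) :
    ∏ k ∈ oddSites M, f (k - 1) = ∏ k ∈ evenSites M, f k :=
  prod_equiv (Equiv.subRight 1)
    (fun k => by rw [← add_one_mem_oddSites_iff hM, Equiv.subRight_apply, sub_add_cancel])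
    fun _ _ => rfl

end Parity

/-- `eH k`, `eW k` stand for `e^{-βH_k(σ)}`, `e^{-βW_{k,k+1}(σ)}`, and `N k` for the number of
configurations of cell `k` with magnetization `η k`. -/
theorem multiscale_identity {K : Type*} [Field K] {M : ℕ} [NeZero M] (hM : Even M)
    (eH eW Zf ZL ZR Z0 Z3 N : Fin M → K) (hZf : ∀ k, Zf k ≠ 0) (hZL : ∀ k, ZL k ≠ 0)
    (hZR : ∀ k, ZR k ≠ 0) (hZ0 : ∀ k, Z0 k ≠ 0) (hZ3 : ∀ k, Z3 k ≠ 0) :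
    (∏ k, eH k) * (∏ k, eW k) * (∏ k, N k)⁻¹ =
      ((∏ k ∈ oddSites M, (Z0 k)⁻¹) * ∏ k ∈ evenSites M, Z3 k) *
        (∏ k ∈ oddSites M, (1 + (Zf k * Z0 k / (ZL k * ZR k) - 1))) *
        ((∏ k ∈ oddSites M, eH k * eW (k - 1) * eW k / Zf k / N k) *
          ∏ k ∈ evenSites M, eH k * ZR (k + 1) * ZL (k - 1) / Z3 k / N k) := by
  have hprod {s : Finset (Fin M)} {Z : Fin M → K} (hZ : ∀ k, Z k ≠ 0) : ∏ k ∈ s, Z k ≠ 0 :=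
    prod_ne_zero_iff.2 fun k _ => hZ k
  simp only [add_sub_cancel, prod_mul_distrib, prod_div_distrib, prod_inv_distrib,
    prod_evenSites_comp_add_one hM ZR, prod_evenSites_comp_sub_one hM ZL,
    prod_oddSites_comp_sub_one hM eW, ← prod_evenSites_mul_prod_oddSites (M := M)]
  field_simp [hprod hZf, hprod hZL, hprod hZR, hprod hZ0, hprod (s := evenSites M) hZ3]

section Cells

variable {M Q : ℕ}

def cellOf (x : Fin (M * Q)) : Fin M :=
  ⟨x.val / Q, Nat.div_lt_of_lt_mul (Nat.mul_comm M Q ▸ x.isLt)⟩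

theorem mem_cell_cellOf (x : Fin (M * Q)) : x ∈ cell M Q (cellOf x) :=
  mem_filter.2 ⟨mem_univ x, rfl⟩

theorem cellOf_eq_of_mem {k : Fin M} {x : Fin (M * Q)} (h : x ∈ cell M Q k) : cellOf x = k :=
  Fin.ext (mem_filter.1 h).2

def cellwiseEquiv : (Fin (M * Q) → Bool) ≃ ∀ k : Fin M, {x // x ∈ cell M Q k} → Bool where
  toFun σ _ x := σ x
  invFun g x := g (cellOf x) ⟨x, mem_cell_cellOf x⟩
  left_inv _ := rfl
  right_inv g := by
    funext k x
    obtain ⟨x, hx⟩ := x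
    obtain rfl := cellOf_eq_of_mem hx
    rfl

theorem mem_cellCfgs_cellwiseEquiv {σ : Fin (M * Q) → Bool} {k : Fin M} {m : ℤ} :
    cellwiseEquiv σ k ∈ cellCfgs M Q k m ↔ cg M Q σ k = m := by
  rw [cellCfgs, mem_filter, cg, ← sum_coe_sort (cell M Q k)]
  exact and_iff_right (mem_univ _)

theorem card_cg_fiber (η : Fin M → ℤ) :
    (univ.filter fun σ : Fin (M * Q) → Bool => cg M Q σ = η).card =
      ∏ k, (cellCfgs M Q k (η k)).card := by
  rw [← Fintype.card_piFinset]
  refine card_equiv cellwiseEquiv fun σ => ?_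
  simp only [mem_filter, mem_univ, true_and, Fintype.mem_piFinset, mem_cellCfgs_cellwiseEquiv,
    funext_iff]

end Cells

section PartitionFunctions

variable {M Q : ℕ} [NeZero M] {β : ℝ} {HK WK : Fin M → (Fin (M * Q) → Bool) → ℝ} {η : Fin M → ℤ}

theorem sum_exp_div_card_pos {ι : Type*} {s : Finset ι} (hs : s.Nonempty) (f : ι → ℝ) :
    0 < (∑ i ∈ s, Real.exp (f i)) / s.card :=
  div_pos (sum_pos (fun _ _ => Real.exp_pos _) hs) (Nat.cast_pos.2 hs.card_pos)

theorem Z3_pos (hne : ∀ k, (cellCfgs M Q k (η k)).Nonempty) (k : Fin M) :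
    0 < Z3 M Q β HK WK η k := by
  have := hne (k - 1); have := hne k; have := hne (k + 1)
  unfold Z3
  positivity

end PartitionFunctions

theorem statement18_general (M Q : ℕ) [NeZero M] (hMe : Even M) (β : ℝ)
    (HK WK : Fin M → (Fin (M * Q) → Bool) → ℝ)
    (η : Fin M → ℤ) :
    ∀ σ : Fin (M * Q) → Bool, cg M Q σ = η →
      Real.exp (-β * ((∑ k, HK k σ) + ∑ k, WK k σ)) *
          ((univ.filter (fun σ' : Fin (M * Q) → Bool => cg M Q σ' = η)).card : ℝ)⁻¹
        = ((∏ k ∈ univ.filter (fun k : Fin M => k.val % 2 = 1),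
              (Zzero M Q β HK η k)⁻¹) *
            ∏ k ∈ univ.filter (fun k : Fin M => k.val % 2 = 0),
              Z3 M Q β HK WK η k) *
          (∏ k ∈ univ.filter (fun k : Fin M => k.val % 2 = 1),
              (1 + fsOdd M Q β HK WK η k σ)) *
          nuM M Q β HK WK η σ := by
  intro σ hσ
  have hne k : (cellCfgs M Q k (η k)).Nonempty :=
    ⟨_, mem_cellCfgs_cellwiseEquiv.2 (congrFun hσ k)⟩
  rw [card_cg_fiber, Nat.cast_prod]
  simp only [mul_add, mul_sum, Real.exp_add, Real.exp_sum, nuM, fsOdd]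
  exact multiscale_identity hMe _ _ _ _ _ _ _ _
    (fun k => (sum_exp_div_card_pos (hne k) _).ne') (fun k => (sum_exp_div_card_pos (hne k) _).ne')
    (fun k => (sum_exp_div_card_pos (hne k) _).ne') (fun k => (sum_exp_div_card_pos (hne k) _).ne')
    (fun k => (Z3_pos hne k).ne')

/-- the exact multiscale decomposition of the short-range Gibbs weight,
`e^{-βH^s(σ)} P(σ|η) = R(η) ∏_{k odd} (1 + f^s_{k-1,k+1}) ν(σ|η)`
(one-dimensional periodic lattice, `M` even). -/
theorem statement18 (M Q : ℕ) [NeZero M] (hM : 2 ≤ M) (hMe : Even M) (hQ : 1 ≤ Q)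
    (β : ℝ) (hβ : 0 < β)
    (HK WK : Fin M → (Fin (M * Q) → Bool) → ℝ)
    (hHloc : ∀ (k : Fin M) (σ σ' : Fin (M * Q) → Bool),
      (∀ x ∈ cell M Q k, σ x = σ' x) → HK k σ = HK k σ')
    (hWloc : ∀ (k : Fin M) (σ σ' : Fin (M * Q) → Bool),
      (∀ x ∈ cell M Q k ∪ cell M Q (k + 1), σ x = σ' x) → WK k σ = WK k σ')
    (η : Fin M → ℤ)
    (hne : (univ.filter (fun σ : Fin (M * Q) → Bool => cg M Q σ = η)).Nonempty) :
    ∀ σ : Fin (M * Q) → Bool, cg M Q σ = η →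
      Real.exp (-β * ((∑ k, HK k σ) + ∑ k, WK k σ)) *
          ((univ.filter (fun σ' : Fin (M * Q) → Bool => cg M Q σ' = η)).card : ℝ)⁻¹
        = ((∏ k ∈ univ.filter (fun k : Fin M => k.val % 2 = 1),
              (Zzero M Q β HK η k)⁻¹) *
            ∏ k ∈ univ.filter (fun k : Fin M => k.val % 2 = 0),
              Z3 M Q β HK WK η k) *
          (∏ k ∈ univ.filter (fun k : Fin M => k.val % 2 = 1),
              (1 + fsOdd M Q β HK WK η k σ)) *
          nuM M Q β HK WK η σ :=
  statement18_general M Q hMe β HK WK η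
end
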